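/- Let x1, …, xn and y be indecomposable objects of T and let f = (f1, …, fn) : x1 ⊕ ⋯ ⊕ xn → y be a morphism of T. If f is right minimal, then for all i ≠ j the morphisms fi and fj are factorization free. -/
import Mathlib


/-!
STATEMENT 0: Let T be a K-linear, Hom-finite, Krull–Schmidt triangulated category.
Let x1, …, xn and y be indecomposable objects of T and let
f = (f1, …, fn) : x1 ⊕ ⋯ ⊕ xn → y be a morphism of T. If f is right minimal, then for all
i ≠ j the morphisms fi and fj are factorization free.
-/

open CategoryTheory Limits Pretriangulated

universe v u

/-- An object of an additive category is indecomposable if it is nonzero and in any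
decomposition as a biproduct one of the two factors is zero. -/
def IsIndecomposable {T : Type u} [Category.{v} T] [Preadditive T] [HasZeroObject T]
    [HasFiniteBiproducts T] [HasBinaryBiproducts T] (X : T) : Prop :=
  ¬ IsZero X ∧ ∀ (Y Z : T), Nonempty (X ≅ Y ⊞ Z) → IsZero Y ∨ IsZero Z

/-- A morphism `f : X ⟶ Y` is right minimal if every `g : X ⟶ X` with `f ∘ g = f`
is an isomorphism. -/
def RightMinimal {T : Type u} [Category.{v} T] {X Y : T} (f : X ⟶ Y) : Prop :=
  ∀ g : X ⟶ X, g ≫ f = f → IsIso g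

/-- Two morphisms `f₁ : x₁ ⟶ y` and `f₂ : x₂ ⟶ y` are factorization free if there is no
`g : x₁ ⟶ x₂` with `f₁ = f₂ ∘ g` and no `h : x₂ ⟶ x₁` with `f₂ = f₁ ∘ h`. -/
def FactorizationFree {T : Type u} [Category.{v} T] {x₁ x₂ y : T}
    (f₁ : x₁ ⟶ y) (f₂ : x₂ ⟶ y) : Prop :=
  (¬ ∃ g : x₁ ⟶ x₂, f₁ = g ≫ f₂) ∧ (¬ ∃ h : x₂ ⟶ x₁, f₂ = h ≫ f₁)

/-- A Krull–Schmidt category: every object is a finite direct sum of objects with local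
endomorphism rings. -/
def IsKrullSchmidt (T : Type u) [Category.{v} T] [Preadditive T] [HasZeroObject T]
    [HasFiniteBiproducts T] [HasBinaryBiproducts T] : Prop :=
  ∀ X : T, ∃ (n : ℕ) (Y : Fin n → T),
    (∀ i, IsLocalRing (End (Y i))) ∧ Nonempty (X ≅ ⨁ Y)


private lemma no_factor_aux {T : Type u} [Category.{v} T] [Preadditive T]
    [HasFiniteBiproducts T]
    {n : ℕ} (x : Fin n → T) {y : T}
    (f : (⨁ x) ⟶ y) (hf : RightMinimal f) {i j : Fin n} (hij : i ≠ j)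
    (hnz : ¬ IsZero (x i)) :
    ¬ ∃ g : x i ⟶ x j, biproduct.ι x i ≫ f = g ≫ (biproduct.ι x j ≫ f) := by
  rintro ⟨g, hg⟩
  set φ : (⨁ x) ⟶ (⨁ x) :=
    𝟙 (⨁ x) - biproduct.π x i ≫ biproduct.ι x i + biproduct.π x i ≫ g ≫ biproduct.ι x j with hφ
  have hφf : φ ≫ f = f := by
    simp [hφ, Preadditive.add_comp, Preadditive.sub_comp, Category.assoc, hg]
  have : IsIso φ := hf φ hφf
  have hπ : φ ≫ biproduct.π x i = 0 := by
    simp [hφ, Preadditive.add_comp, Preadditive.sub_comp, Category.assoc,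
      biproduct.ι_π_ne _ hij.symm]
  have hπ0 : biproduct.π x i = 0 := by
    have := congrArg (fun t => inv φ ≫ t) hπ
    simpa using this
  apply hnz
  rw [IsZero.iff_id_eq_zero]
  have := biproduct.ι_π_self x i
  rw [hπ0, comp_zero] at this
  exact this.symm

theorem rightMinimal_pairwise_factorizationFree
    {K : Type*} [Field K] {T : Type u} [Category.{v} T] [Preadditive T] [Linear K T]
    [HasZeroObject T] [HasFiniteBiproducts T] [HasBinaryBiproducts T] [HasShift T ℤ]
    [∀ n : ℤ, (shiftFunctor T n).Additive] [Pretriangulated T]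
    [∀ X Y : T, FiniteDimensional K (X ⟶ Y)]
    (hKS : IsKrullSchmidt T)
    {n : ℕ} (x : Fin n → T) (y : T)
    (hx : ∀ i, IsIndecomposable (x i)) (hy : IsIndecomposable y)
    (f : (⨁ x) ⟶ y) (hf : RightMinimal f) :
    ∀ i j : Fin n, i ≠ j →
      FactorizationFree (biproduct.ι x i ≫ f) (biproduct.ι x j ≫ f) := by
  intro i j hij
  exact ⟨no_factor_aux x f hf hij (hx i).1, no_factor_aux x f hf hij.symm (hx j).1⟩
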